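/- arXiv:math/0112298 — 3 statements merged into one kernel-verified Lean document; each statement's English description precedes it below -/
import Mathlib

section
/- With v = 1/(1+j) and d = j/(1+j), the squared-increasing annuity-due satisfies (I²s̈)_k = ((1+v)(s̈_k + k²) − 2k − 2k²)/d². -/
/-!
Clearing the denominators `d² = (j/r)²` and `v = 1/r` with `r = 1 + j` turns the claim into a
polynomial identity in `r` over any commutative ring. Both sides then satisfy the same
recursion in `k`: the accumulated sum obeys `X_{k+1} = r X_k + (k+1)² r` and the geometric sum
obeys `s̈_{k+1} = r (s̈_k + 1)`, so induction on `k` closes it.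
-/

namespace Finset

variable {R : Type*} [CommRing R]

theorem sum_Icc_one_pow_succ (r : R) (k : ℕ) :
    ∑ i ∈ Icc 1 (k + 1), r ^ i = r * (∑ i ∈ Icc 1 k, r ^ i + 1) := by
  induction k with
  | zero => simp
  | succ k ih =>
    have hsucc := sum_Icc_succ_top (show 1 ≤ k + 1 by omega) (fun i => r ^ i)
    rw [sum_Icc_succ_top (show 1 ≤ k + 1 + 1 by omega)]
    linear_combination ih - r * hsucc

theorem sum_Icc_one_mul_pow_sub_succ (f : ℕ → R) (r : R) (k : ℕ) :
    ∑ m ∈ Icc 1 (k + 1), f m * r ^ (k + 1 - m + 1) =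
      r * ∑ m ∈ Icc 1 k, f m * r ^ (k - m + 1) + f (k + 1) * r := by
  rw [sum_Icc_succ_top (show 1 ≤ k + 1 by omega), mul_sum, Nat.sub_self, zero_add, pow_one]
  congr 1
  refine sum_congr rfl fun m hm => ?_
  rw [show k + 1 - m + 1 = k - m + 1 + 1 by have := (mem_Icc.mp hm).2; omega, pow_succ]
  ring

theorem sub_one_sq_mul_sum_Icc_sq_mul_pow (r : R) (k : ℕ) :
    (r - 1) ^ 2 * ∑ m ∈ Icc 1 k, (m : R) ^ 2 * r ^ (k - m + 1) =
      r * (r + 1) * (∑ i ∈ Icc 1 k, r ^ i + (k : R) ^ 2) - 2 * r ^ 2 * (k + (k : R) ^ 2) := by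
  induction k with
  | zero => simp
  | succ k ih =>
    rw [sum_Icc_one_mul_pow_sub_succ (fun m : ℕ => (m : R) ^ 2), sum_Icc_one_pow_succ]
    push_cast
    linear_combination r * ih

end Finset

theorem sq_increasing_annuity_via_v (j : ℝ) (hj : 0 < j) (k : ℕ) :
    (∑ m ∈ Finset.Icc 1 k, (m : ℝ) ^ 2 * (1 + j) ^ (k - m + 1)) =
      ((1 + 1 / (1 + j)) * ((∑ i ∈ Finset.Icc 1 k, (1 + j) ^ i) + (k : ℝ) ^ 2) -
        2 * k - 2 * (k : ℝ) ^ 2) / (j / (1 + j)) ^ 2 := by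
  have key := Finset.sub_one_sq_mul_sum_Icc_sq_mul_pow (1 + j) k
  rw [add_sub_cancel_left] at key
  have h1j : 1 + j ≠ 0 := by positivity
  rw [eq_div_iff (by positivity)]
  field_simp
  linear_combination key
end

section
/- The square of the level annuity accumulated value satisfies (s̈_k)² = (s̈_{2k} − 2·s̈_k)/d, where d = j/(1+j). -/
/-! With `x = 1 + j` and `sₙ = x + ⋯ + xⁿ`, the geometric sum gives `(x - 1) sₙ = x (xⁿ - 1)`.
Hence `(x - 1)² sₖ² = x² (xᵏ - 1)² = x² ((x²ᵏ - 1) - 2 (xᵏ - 1)) = x (x - 1) (s₂ₖ - 2 sₖ)`,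
and cancelling `x - 1 = j` leaves `sₖ² = (s₂ₖ - 2 sₖ) · x / j = (s₂ₖ - 2 sₖ) / d`. -/

open Finset

theorem sum_Icc_one_pow_eq_mul_geom_sum {R : Type*} [Semiring R] (x : R) (n : ℕ) :
    ∑ i ∈ Icc 1 n, x ^ i = x * ∑ i ∈ range n, x ^ i := by
  induction n with
  | zero => simp
  | succ n ih =>
    rw [sum_Icc_succ_top (by omega), sum_range_succ, mul_add, ih, pow_succ']

theorem sub_one_mul_sum_Icc_one_pow {R : Type*} [CommRing R] (x : R) (n : ℕ) :
    (x - 1) * ∑ i ∈ Icc 1 n, x ^ i = x * (x ^ n - 1) := by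
  rw [sum_Icc_one_pow_eq_mul_geom_sum, mul_left_comm, mul_geom_sum]

theorem sub_one_mul_sum_Icc_one_pow_sq {R : Type*} [CommRing R] [IsDomain R] {x : R}
    (hx : x ≠ 1) (k : ℕ) :
    (x - 1) * (∑ i ∈ Icc 1 k, x ^ i) ^ 2 =
      x * (∑ i ∈ Icc 1 (2 * k), x ^ i - 2 * ∑ i ∈ Icc 1 k, x ^ i) := by
  set s := ∑ i ∈ Icc 1 k, x ^ i
  have hs := sub_one_mul_sum_Icc_one_pow x k
  have hs₂ := sub_one_mul_sum_Icc_one_pow x (2 * k)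
  refine mul_left_cancel₀ (sub_ne_zero.mpr hx) ?_
  linear_combination ((x - 1) * s + x * (x ^ k - 1) + 2 * x) * hs - x * hs₂

theorem sum_Icc_one_pow_sq_eq_div {K : Type*} [Field K] {x : K} (hx : x ≠ 1)
    (k : ℕ) :
    (∑ i ∈ Icc 1 k, x ^ i) ^ 2 =
      (∑ i ∈ Icc 1 (2 * k), x ^ i - 2 * ∑ i ∈ Icc 1 k, x ^ i) / ((x - 1) / x) := by
  rw [div_div_eq_mul_div, eq_div_iff (sub_ne_zero.mpr hx), mul_comm,
    sub_one_mul_sum_Icc_one_pow_sq hx, mul_comm]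

theorem annuity_square_formula (j : ℝ) (hj : 0 < j) (k : ℕ) :
    (∑ i ∈ Finset.Icc 1 k, (1 + j) ^ i) ^ 2 =
      ((∑ i ∈ Finset.Icc 1 (2 * k), (1 + j) ^ i) -
        2 * ∑ i ∈ Finset.Icc 1 k, (1 + j) ^ i) / (j / (1 + j)) := by
  have h := sum_Icc_one_pow_sq_eq_div (x := 1 + j) (by linarith) k
  rwa [add_sub_cancel_left] at h
end

section
/- The square of the increasing annuity accumulated value satisfies ((Is̈)_k)² = ((Is̈)_{2k} − 2(1+kd)(Is̈)_k − k²)/d², where d = j/(1+j). -/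
/-!
Write `x = 1 + j` and `d = j / (1 + j)`, so that `d * x = j`. By induction on `k`,
`x ^ k = 1 + k d + d² (Is̈)_k`. Squaring this and comparing with the same expansion of
`x ^ (2k)` gives `d² (Is̈)_{2k} = d² (d² (Is̈)_k² + 2 (1 + k d) (Is̈)_k + k²)`, and `d ≠ 0`.
-/

open Finset

section

variable {R : Type*} [CommRing R]

def increasingAnnuityDue (j : R) (k : ℕ) : R :=
  ∑ m ∈ Icc 1 k, (m : R) * (1 + j) ^ (k - m + 1)

theorem increasingAnnuityDue_succ (j : R) (k : ℕ) :
    increasingAnnuityDue j (k + 1) = (1 + j) * increasingAnnuityDue j k + (k + 1) * (1 + j) := by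
  unfold increasingAnnuityDue
  rw [sum_Icc_succ_top (by omega), Nat.sub_self, mul_sum]
  push_cast
  congr 1
  · refine sum_congr rfl fun m hm => ?_
    rw [show k + 1 - m + 1 = (k - m + 1) + 1 by grind, pow_succ]
    ring
  · ring

theorem one_add_pow_eq_increasingAnnuityDue {j d : R} (hd : d * (1 + j) = j) (k : ℕ) :
    (1 + j) ^ k = 1 + k * d + d ^ 2 * increasingAnnuityDue j k := by
  induction k with
  | zero => simp [increasingAnnuityDue]
  | succ k ih =>
    rw [increasingAnnuityDue_succ, pow_succ, ih]
    push_cast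
    linear_combination (-1 - (k + 1) * d) * hd

theorem increasingAnnuityDue_two_mul {K : Type*} [Field K] {j d : K} (hd : d * (1 + j) = j)
    (hd₀ : d ≠ 0) (k : ℕ) :
    increasingAnnuityDue j (2 * k) =
      d ^ 2 * increasingAnnuityDue j k ^ 2 + 2 * (1 + k * d) * increasingAnnuityDue j k + k ^ 2 := by
  have hk := one_add_pow_eq_increasingAnnuityDue hd k
  have h2k := one_add_pow_eq_increasingAnnuityDue hd (2 * k)
  rw [pow_mul', sq, hk] at h2k
  push_cast at h2k
  refine mul_left_cancel₀ (pow_ne_zero 2 hd₀) ?_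
  linear_combination -h2k

end

theorem increasing_annuity_square_formula (j : ℝ) (hj : 0 < j) (k : ℕ) :
    (∑ m ∈ Finset.Icc 1 k, (m : ℝ) * (1 + j) ^ (k - m + 1)) ^ 2 =
      ((∑ m ∈ Finset.Icc 1 (2 * k), (m : ℝ) * (1 + j) ^ (2 * k - m + 1)) -
        2 * (1 + k * (j / (1 + j))) *
          (∑ m ∈ Finset.Icc 1 k, (m : ℝ) * (1 + j) ^ (k - m + 1)) -
        (k : ℝ) ^ 2) / (j / (1 + j)) ^ 2 := by
  have hd₀ : j / (1 + j) ≠ 0 := by positivity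
  have hd : j / (1 + j) * (1 + j) = j := div_mul_cancel₀ j (by positivity)
  change increasingAnnuityDue j k ^ 2 =
    (increasingAnnuityDue j (2 * k) - 2 * (1 + k * (j / (1 + j))) * increasingAnnuityDue j k -
      (k : ℝ) ^ 2) / (j / (1 + j)) ^ 2
  rw [increasingAnnuityDue_two_mul hd hd₀, eq_div_iff (pow_ne_zero 2 hd₀)]
  ring
end
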